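/- arXiv:1411.0951 — 2 statements merged into one kernel-verified Lean document; each statement's English description precedes it below -/
import Mathlib

section
/- The length-four flag models (3.1.) and (3.𝟐.) in ℝ⁶ are not locally equivalent at the origin: there is no diffeomorphism φ between open neighborhoods U and V of 0 in ℝ⁶ with φ(0) = 0 such that, for every x ∈ U, the pullback by dφ_x of the span at φ(x) of the four forms dx²+x³dx¹, dx³+x⁴dx¹, dx¹+x⁵dx⁴, dx⁵+x⁶dx⁴ (model (3.1.)) equals the span at x of the four forms dx²+x³dx¹, dx³+x⁴dx¹, dx¹+x⁵dx⁴, dx⁵+(x⁶+1)dx⁴ (model (3.𝟐.)). -/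
open scoped BigOperators

noncomputable section

/-- The coordinate 1-form `dxⁱ` on `ℝⁿ` (as a constant continuous linear functional). -/
def dxi {n : ℕ} (i : Fin n) : (Fin n → ℝ) →L[ℝ] ℝ := ContinuousLinearMap.proj i

/-- The Lie derivative `θ(ξ)ω = d(ι(ξ)ω) + ι(ξ)(dω)` of a 1-form `ω` along a vector
field `ξ`, evaluated at the point `x` on the tangent vector `v`.  Here
`ι(ξ)ω : x ↦ ω_x(ξ x)`, `d` of a function is `fderiv`, and
`(dω)_x(u,v) = (D_u ω)(v) − (D_v ω)(u)`. -/
def lieD {n : ℕ} (ξ : (Fin n → ℝ) → (Fin n → ℝ))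
    (ω : (Fin n → ℝ) → (Fin n → ℝ) →L[ℝ] ℝ) (x v : Fin n → ℝ) : ℝ :=
  fderiv ℝ (fun y => ω y (ξ y)) x v
    + ((fderiv ℝ ω x (ξ x)) v - (fderiv ℝ ω x v) (ξ x))

/-- `ξ` is an infinitesimal automorphism of the Pfaffian system spanned by the
1-forms `ω 0, …, ω (r-1)` : each Lie derivative `θ(ξ)(ω i)` lies, at every point,
in the linear span of the `ω j`. -/
def IsIA {n r : ℕ} (ω : Fin r → (Fin n → ℝ) → (Fin n → ℝ) →L[ℝ] ℝ)
    (ξ : (Fin n → ℝ) → (Fin n → ℝ)) : Prop :=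
  ∀ i : Fin r, ∀ x : Fin n → ℝ, ∃ c : Fin r → ℝ,
    ∀ v : Fin n → ℝ, lieD ξ (ω i) x v = ∑ j, c j * ω j x v

/-- The partial derivative `∂f/∂xⁱ`. -/
def pd {n : ℕ} (i : Fin n) (f : (Fin n → ℝ) → ℝ) : (Fin n → ℝ) → ℝ :=
  fun x => fderiv ℝ f x (Pi.single i 1)

/-- The Darboux contact form `ω = dx² + x³dx¹` on `ℝ³`. -/
def darboux (x : Fin 3 → ℝ) : (Fin 3 → ℝ) →L[ℝ] ℝ := dxi 1 + x 2 • dxi 0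


/-- The length-four flag model (3.1.) on `ℝ⁶`, spanned by `dx²+x³dx¹`,
`dx³+x⁴dx¹`, `dx¹+x⁵dx⁴`, `dx⁵+x⁶dx⁴`. -/
def model31 : Fin 4 → (Fin 6 → ℝ) → (Fin 6 → ℝ) →L[ℝ] ℝ :=
  ![fun x => dxi 1 + x 2 • dxi 0, fun x => dxi 2 + x 3 • dxi 0,
    fun x => dxi 0 + x 4 • dxi 3, fun x => dxi 4 + x 5 • dxi 3]

/-- The length-four flag model (3.𝟐.) on `ℝ⁶`, spanned by `dx²+x³dx¹`,
`dx³+x⁴dx¹`, `dx¹+x⁵dx⁴`, `dx⁵+(x⁶+1)dx⁴`. -/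
def model32 : Fin 4 → (Fin 6 → ℝ) → (Fin 6 → ℝ) →L[ℝ] ℝ :=
  ![fun x => dxi 1 + x 2 • dxi 0, fun x => dxi 2 + x 3 • dxi 0,
    fun x => dxi 0 + x 4 • dxi 3, fun x => dxi 4 + (x 5 + 1) • dxi 3]

/-! ### Auxiliary machinery for `stmt17` -/

lemma m31_0 : model31 0 = fun x => dxi 1 + x 2 • dxi 0 := rfl
lemma m31_1 : model31 1 = fun x => dxi 2 + x 3 • dxi 0 := rfl
lemma m31_2 : model31 2 = fun x => dxi 0 + x 4 • dxi 3 := rfl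
lemma m31_3 : model31 3 = fun x => dxi 4 + x 5 • dxi 3 := rfl
lemma m32_0 : model32 0 = fun x => dxi 1 + x 2 • dxi 0 := rfl
lemma m32_1 : model32 1 = fun x => dxi 2 + x 3 • dxi 0 := rfl
lemma m32_2 : model32 2 = fun x => dxi 0 + x 4 • dxi 3 := rfl
lemma m32_3 : model32 3 = fun x => dxi 4 + (x 5 + 1) • dxi 3 := rfl

abbrev E6 := Fin 6 → ℝ
def sv (i : Fin 6) : E6 := Pi.single i 1
def prj (i : Fin 6) : E6 →L[ℝ] ℝ := ContinuousLinearMap.proj i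

def V0 : E6 → E6 := fun _ => sv 5
def V1 : E6 → E6 := fun x => (-(x 4)) • sv 0 + (x 2 * x 4) • sv 1 + (x 3 * x 4) • sv 2
  + sv 3 + (-(x 5)) • sv 4
def V2 : E6 → E6 := fun _ => -sv 4
def V3 : E6 → E6 := fun x => -sv 0 + (x 2) • sv 1 + (x 3) • sv 2
def V4 : E6 → E6 := fun _ => sv 2
def V5 : E6 → E6 := fun x => (-(x 4)) • sv 1
def V6 : E6 → E6 := fun x => (x 5) • sv 1
def X2 : E6 → E6 := fun x => V1 x + (-1 : ℝ) • sv 4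
def Q6 : E6 → E6 := fun x => (1 + x 5) • sv 1

lemma hasFDerivAt_coord (i : Fin 6) (x : E6) : HasFDerivAt (fun y : E6 => y i) (prj i) x :=
  (prj i).hasFDerivAt (x := x)

lemma hV1 (x : E6) : HasFDerivAt V1
    ((-prj 4).smulRight (sv 0) + (x 2 • prj 4 + x 4 • prj 2).smulRight (sv 1) +
      (x 3 • prj 4 + x 4 • prj 3).smulRight (sv 2) + 0 + (-prj 5).smulRight (sv 4)) x := by
  have h2 := hasFDerivAt_coord 2 x
  have h3 := hasFDerivAt_coord 3 x
  have h4 := hasFDerivAt_coord 4 x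
  have h5 := hasFDerivAt_coord 5 x
  exact ((((h4.neg.smul_const (sv 0)).add ((h2.mul h4).smul_const (sv 1))).add
      ((h3.mul h4).smul_const (sv 2))).add (hasFDerivAt_const (sv 3) x)).add
      (h5.neg.smul_const (sv 4))

lemma fderivV1 (x v : E6) : fderiv ℝ V1 x v =
    (-(v 4)) • sv 0 + (x 2 * v 4 + x 4 * v 2) • sv 1 + (x 3 * v 4 + x 4 * v 3) • sv 2
      + (-(v 5)) • sv 4 := by
  rw [(hV1 x).fderiv]
  simp [prj, ContinuousLinearMap.smulRight_apply]

lemma hV3 (x : E6) : HasFDerivAt V3 ((prj 2).smulRight (sv 1) + (prj 3).smulRight (sv 2)) x := by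
  have h2 := hasFDerivAt_coord 2 x
  have h3 := hasFDerivAt_coord 3 x
  have : HasFDerivAt V3 ((0 : E6 →L[ℝ] E6) + (prj 2).smulRight (sv 1) + (prj 3).smulRight (sv 2))
      x := ((hasFDerivAt_const (-sv 0) x).add (h2.smul_const (sv 1))).add (h3.smul_const (sv 2))
  simpa using this

lemma fderivV3 (x v : E6) : fderiv ℝ V3 x v = (v 2) • sv 1 + (v 3) • sv 2 := by
  rw [(hV3 x).fderiv]; simp [prj]

lemma hV5 (x : E6) : HasFDerivAt V5 ((-prj 4).smulRight (sv 1)) x :=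
  (hasFDerivAt_coord 4 x).neg.smul_const (sv 1)

lemma fderivV5 (x v : E6) : fderiv ℝ V5 x v = (-(v 4)) • sv 1 := by
  rw [(hV5 x).fderiv]; simp [prj]

lemma hV6 (x : E6) : HasFDerivAt V6 ((prj 5).smulRight (sv 1)) x :=
  (hasFDerivAt_coord 5 x).smul_const (sv 1)

lemma fderivV6 (x v : E6) : fderiv ℝ V6 x v = (v 5) • sv 1 := by
  rw [(hV6 x).fderiv]; simp [prj]

lemma fderivV0 (x v : E6) : fderiv ℝ V0 x v = 0 := by
  rw [show V0 = fun _ => sv 5 from rfl, fderiv_fun_const]; simp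

lemma fderivV2 (x v : E6) : fderiv ℝ V2 x v = 0 := by
  rw [show V2 = fun _ => -sv 4 from rfl, fderiv_fun_const]; simp

lemma fderivV4 (x v : E6) : fderiv ℝ V4 x v = 0 := by
  rw [show V4 = fun _ => sv 2 from rfl, fderiv_fun_const]; simp

lemma hX2 (x : E6) : HasFDerivAt X2
    ((-prj 4).smulRight (sv 0) + (x 2 • prj 4 + x 4 • prj 2).smulRight (sv 1) +
      (x 3 • prj 4 + x 4 • prj 3).smulRight (sv 2) + 0 + (-prj 5).smulRight (sv 4)) x := by
  have : HasFDerivAt X2 (((-prj 4).smulRight (sv 0) + (x 2 • prj 4 + x 4 • prj 2).smulRight (sv 1) +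
      (x 3 • prj 4 + x 4 • prj 3).smulRight (sv 2) + 0 + (-prj 5).smulRight (sv 4)) + 0) x :=
    (hV1 x).add (hasFDerivAt_const ((-1 : ℝ) • sv 4) x)
  simpa using this

lemma fderivX2 (x v : E6) : fderiv ℝ X2 x v =
    (-(v 4)) • sv 0 + (x 2 * v 4 + x 4 * v 2) • sv 1 + (x 3 * v 4 + x 4 * v 3) • sv 2
      + (-(v 5)) • sv 4 := by
  rw [(hX2 x).fderiv]
  simp [prj, ContinuousLinearMap.smulRight_apply]

open VectorField

/-! ### Bracket table -/

lemma brY01 : lieBracket ℝ V0 V1 = V2 := by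
  funext x
  simp only [lieBracket, fderivV1, fderivV0]
  simp [V0, V2, sv]

lemma brY02 : lieBracket ℝ V0 V2 = 0 := by
  funext x; simp only [lieBracket, fderivV0, fderivV2]; simp

lemma brY03 : lieBracket ℝ V0 V3 = 0 := by
  funext x; simp only [lieBracket, fderivV0, fderivV3]; simp [V0, sv]

lemma brY04 : lieBracket ℝ V0 V4 = 0 := by
  funext x; simp only [lieBracket, fderivV0, fderivV4]; simp

lemma brY05 : lieBracket ℝ V0 V5 = 0 := by
  funext x; simp only [lieBracket, fderivV0, fderivV5]; simp [V0, sv]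

lemma brY10 : lieBracket ℝ V1 V0 = fun x => -V2 x := by
  funext x
  simp only [lieBracket, fderivV1, fderivV0]
  simp [V0, V2, sv]

lemma brY12 : lieBracket ℝ V1 V2 = V3 := by
  funext x
  simp only [lieBracket, fderivV1, fderivV2]
  simp only [V2, V3, sv]
  funext j; fin_cases j <;> simp [Pi.single_apply]

lemma brY13 : lieBracket ℝ V1 V3 = V4 := by
  funext x
  simp only [lieBracket, fderivV1, fderivV3]
  simp only [V1, V3, V4, sv]
  funext j; fin_cases j <;> simp [Pi.single_apply] <;> ring

lemma brY14 : lieBracket ℝ V1 V4 = V5 := by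
  funext x
  simp only [lieBracket, fderivV1, fderivV4]
  simp only [V4, V5, sv]
  funext j; fin_cases j <;> simp [Pi.single_apply]

lemma brY15 : lieBracket ℝ V1 V5 = V6 := by
  funext x
  simp only [lieBracket, fderivV1, fderivV5]
  simp only [V1, V5, V6, sv]
  funext j; fin_cases j <;> simp [Pi.single_apply] <;> ring

lemma brX0 : lieBracket ℝ V0 X2 = V2 := by
  funext x
  simp only [lieBracket, fderivX2, fderivV0]
  simp [V0, V2, sv]

lemma brX2 : lieBracket ℝ X2 V2 = V3 := by
  funext x
  simp only [lieBracket, fderivX2, fderivV2]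
  simp only [V2, V3, sv]
  funext j; fin_cases j <;> simp [Pi.single_apply]

lemma brX3 : lieBracket ℝ X2 V3 = V4 := by
  funext x
  simp only [lieBracket, fderivX2, fderivV3]
  simp only [X2, V1, V3, V4, sv]
  funext j; fin_cases j <;> simp [Pi.single_apply] <;> ring

lemma brX4 : lieBracket ℝ X2 V4 = V5 := by
  funext x
  simp only [lieBracket, fderivX2, fderivV4]
  simp only [V4, V5, sv]
  funext j; fin_cases j <;> simp [Pi.single_apply]

lemma brX5 : lieBracket ℝ X2 V5 = Q6 := by
  funext x
  simp only [lieBracket, fderivX2, fderivV5]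
  simp only [X2, V1, V5, Q6, sv]
  funext j; fin_cases j <;> simp [Pi.single_apply] <;> ring

/-! ### The seven fields, levels, structure constants -/

def VV : Fin 7 → E6 → E6 := ![V0, V1, V2, V3, V4, V5, V6]
def lev : Fin 7 → ℕ := ![1, 1, 2, 3, 4, 5, 6]

lemma VV_0 : VV 0 = V0 := rfl
lemma VV_1 : VV 1 = V1 := rfl
lemma VV_2 : VV 2 = V2 := rfl
lemma VV_3 : VV 3 = V3 := rfl
lemma VV_4 : VV 4 = V4 := rfl
lemma VV_5 : VV 5 = V5 := rfl
lemma VV_6 : VV 6 = V6 := rfl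
def Tz : Fin 7 → Fin 7 → Fin 7 → ℤ := fun i k l =>
  if i = 0 ∧ k = 1 ∧ l = 2 then 1
  else if i = 1 ∧ k = 0 ∧ l = 2 then -1
  else if i = 1 ∧ k = 2 ∧ l = 3 then 1
  else if i = 1 ∧ k = 3 ∧ l = 4 then 1
  else if i = 1 ∧ k = 4 ∧ l = 5 then 1
  else if i = 1 ∧ k = 5 ∧ l = 6 then 1 else 0

lemma Tz_support (i k l : Fin 7) (h : Tz i k l ≠ 0) : lev l = lev k + 1 := by
  revert h; revert i k l; decide

lemma diffVV : ∀ (i : Fin 7) (y : E6), DifferentiableAt ℝ (VV i) y := by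
  intro i y
  fin_cases i
  · exact (differentiable_const (sv 5)).differentiableAt
  · exact (hV1 y).differentiableAt
  · exact (differentiable_const (-sv 4)).differentiableAt
  · exact (hV3 y).differentiableAt
  · exact (differentiable_const (sv 2)).differentiableAt
  · exact (hV5 y).differentiableAt
  · exact (hV6 y).differentiableAt

lemma contDiff_coord (i : Fin 6) (n : ℕ) : ContDiff ℝ (n : ℕ∞) (fun y : E6 => y i) :=
  (prj i).contDiff

lemma contDiffVV : ∀ (i : Fin 7) (n : ℕ), ContDiff ℝ (n : ℕ∞) (VV i) := by
  intro i n
  have h2 := contDiff_coord 2 n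
  have h3 := contDiff_coord 3 n
  have h4 := contDiff_coord 4 n
  have h5 := contDiff_coord 5 n
  fin_cases i
  · exact contDiff_const
  · exact ((((h4.neg.smul contDiff_const).add ((h2.mul h4).smul contDiff_const)).add
      ((h3.mul h4).smul contDiff_const)).add contDiff_const).add (h5.neg.smul contDiff_const)
  · exact contDiff_const
  · exact (contDiff_const.add (h2.smul contDiff_const)).add (h3.smul contDiff_const)
  · exact contDiff_const
  · exact h4.neg.smul contDiff_const
  · exact h5.smul contDiff_const

lemma contDiffX2 (n : ℕ) : ContDiff ℝ (n : ℕ∞) X2 := by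
  have h := contDiffVV 1 n
  simp only [VV, Matrix.cons_val_one, Matrix.head_cons] at h
  exact h.add contDiff_const

lemma sumTz (a b : Fin 7) (x : E6) : (∑ l, (Tz a b l : ℝ) • VV l x)
    = (Tz a b 0 : ℝ) • V0 x + (Tz a b 1 : ℝ) • V1 x + (Tz a b 2 : ℝ) • V2 x
      + (Tz a b 3 : ℝ) • V3 x + (Tz a b 4 : ℝ) • V4 x + (Tz a b 5 : ℝ) • V5 x
      + (Tz a b 6 : ℝ) • V6 x := by
  rw [Fin.sum_univ_seven, VV_0, VV_1, VV_2, VV_3, VV_4, VV_5, VV_6]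

lemma table : ∀ (i k : Fin 7), (i : ℕ) < 2 → k ≠ 6 → ∀ x : E6,
    lieBracket ℝ (VV i) (VV k) x = ∑ l, (Tz i k l : ℝ) • VV l x := by
  intro i k hi hk x
  rw [sumTz]
  have e2 : (⟨2, by norm_num⟩ : Fin 7) = 2 := rfl
  have e3 : (⟨3, by norm_num⟩ : Fin 7) = 3 := rfl
  have e4 : (⟨4, by norm_num⟩ : Fin 7) = 4 := rfl
  have e5 : (⟨5, by norm_num⟩ : Fin 7) = 5 := rfl
  fin_cases i <;> (try beta_reduce) <;> simp only [Fin.zero_eta, Fin.mk_one, e2, e3, e4, e5] at hk ⊢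
  · fin_cases k <;> (try beta_reduce) <;> simp only [Fin.zero_eta, Fin.mk_one, e2, e3, e4, e5] at hk ⊢
    · rw [VV_0]; simp (config := {decide := true}) [Tz, lieBracket_self]
    · rw [VV_0, VV_1, brY01]; simp (config := {decide := true}) [Tz]
    · rw [VV_0, VV_2, brY02]; simp (config := {decide := true}) [Tz]
    · rw [VV_0, VV_3, brY03]; simp (config := {decide := true}) [Tz]
    · rw [VV_0, VV_4, brY04]; simp (config := {decide := true}) [Tz]
    · rw [VV_0, VV_5, brY05]; simp (config := {decide := true}) [Tz]
    · exact absurd rfl hk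
  · fin_cases k <;> (try beta_reduce) <;> simp only [Fin.zero_eta, Fin.mk_one, e2, e3, e4, e5] at hk ⊢
    · rw [VV_1, VV_0, brY10]; simp (config := {decide := true}) [Tz]
    · rw [VV_1]; simp (config := {decide := true}) [Tz, lieBracket_self]
    · rw [VV_1, VV_2, brY12]; simp (config := {decide := true}) [Tz]
    · rw [VV_1, VV_3, brY13]; simp (config := {decide := true}) [Tz]
    · rw [VV_1, VV_4, brY14]; simp (config := {decide := true}) [Tz]
    · rw [VV_1, VV_5, brY15]; simp (config := {decide := true}) [Tz]
    · exact absurd rfl hk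
  all_goals exact absurd hi (by decide)

def Mem (Ω : Set E6) (j : ℕ) (Z : E6 → E6) : Prop :=
  ∃ c : Fin 7 → E6 → ℝ,
    (∀ (i : Fin 7) (n : ℕ), ∀ x ∈ Ω, ContDiffAt ℝ n (c i) x) ∧
    (∀ i : Fin 7, j < lev i → c i = 0) ∧
    (∀ x ∈ Ω, Z x = ∑ i, c i x • VV i x)

lemma Mem.bracket {Ω : Set E6} (hΩ : IsOpen Ω) {A B : E6 → E6} {j : ℕ}
    (hA : Mem Ω 1 A) (hB : Mem Ω j B) (hj : j + 1 ≤ 6) :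
    Mem Ω (j + 1) (VectorField.lieBracket ℝ A B) := by
  obtain ⟨c, hc, hclev, hcA⟩ := hA
  obtain ⟨d, hd, hdlev, hdB⟩ := hB
  have hc2 : ∀ i : Fin 7, 2 ≤ (i : ℕ) → c i = 0 := by
    intro i hi
    apply hclev
    revert hi
    fin_cases i <;> decide
  have hd6 : d 6 = 0 := hdlev 6 (by rw [show lev 6 = 6 from by decide]; omega)
  -- smoothness of A and B at points of Ω
  have hAsm : ∀ (n : ℕ), ∀ x ∈ Ω, ContDiffAt ℝ n A x := by
    intro n x hx
    have : ContDiffAt ℝ n (fun y => ∑ i, c i y • VV i y) x := by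
      apply ContDiffAt.sum
      intro i _
      exact (hc i n x hx).smul ((contDiffVV i n).contDiffAt)
    exact this.congr_of_eventuallyEq (by
      filter_upwards [hΩ.mem_nhds hx] with y hy using hcA y hy)
  have hBsm : ∀ (n : ℕ), ∀ x ∈ Ω, ContDiffAt ℝ n B x := by
    intro n x hx
    have : ContDiffAt ℝ n (fun y => ∑ i, d i y • VV i y) x := by
      apply ContDiffAt.sum
      intro i _
      exact (hd i n x hx).smul ((contDiffVV i n).contDiffAt)
    exact this.congr_of_eventuallyEq (by
      filter_upwards [hΩ.mem_nhds hx] with y hy using hdB y hy)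
  refine ⟨fun l x => (∑ i, ∑ k, c i x * d k x * (Tz i k l : ℝ))
      + (fderiv ℝ (d l) x (A x) - fderiv ℝ (c l) x (B x)), ?_, ?_, ?_⟩
  · -- smoothness of new coefficients
    intro l n x hx
    apply ContDiffAt.add
    · apply ContDiffAt.sum; intro i _
      apply ContDiffAt.sum; intro k _
      exact ((hc i n x hx).mul (hd k n x hx)).mul contDiffAt_const
    · apply ContDiffAt.sub
      · exact ((hd l (n+1) x hx).fderiv_right (by norm_num)).clm_apply (hAsm n x hx)
      · exact ((hc l (n+1) x hx).fderiv_right (by norm_num)).clm_apply (hBsm n x hx)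
  · -- level bound
    intro l hl
    funext x
    have hdl : d l = 0 := hdlev l (by omega)
    have hcl : c l = 0 := hclev l (by omega)
    have hT : ∀ i k : Fin 7, c i x * d k x * (Tz i k l : ℝ) = 0 := by
      intro i k
      by_cases hci : 2 ≤ (i : ℕ)
      · simp [hc2 i hci]
      · by_cases hdk : j < lev k
        · simp [hdlev k hdk]
        · have : Tz i k l = 0 := by
            by_contra h
            have := Tz_support i k l h
            omega
          simp [this]
    simp only [hdl, hcl, show (0 : E6 → ℝ) = fun _ => (0:ℝ) from rfl, fderiv_const_apply]
    simp [hT]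
  · -- the main identity
    intro x hx
    have hdc : ∀ i, DifferentiableAt ℝ (c i) x :=
      fun i => (hc i 1 x hx).differentiableAt (by norm_num)
    have hdd : ∀ i, DifferentiableAt ℝ (d i) x :=
      fun i => (hd i 1 x hx).differentiableAt (by norm_num)
    have hSA : fderiv ℝ A x = ∑ i, (c i x • fderiv ℝ (VV i) x
        + (fderiv ℝ (c i) x).smulRight (VV i x)) := by
      have e1 : fderiv ℝ A x = fderiv ℝ (fun y => ∑ i, c i y • VV i y) x := by
        apply Filter.EventuallyEq.fderiv_eq
        filter_upwards [hΩ.mem_nhds hx] with y hy using hcA y hy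
      rw [e1, fderiv_fun_sum (A := fun i y => c i y • VV i y) (fun i _ => (hdc i).smul (diffVV i x))]
      exact Finset.sum_congr rfl fun i _ => fderiv_fun_smul (hdc i) (diffVV i x)
    have hSB : fderiv ℝ B x = ∑ i, (d i x • fderiv ℝ (VV i) x
        + (fderiv ℝ (d i) x).smulRight (VV i x)) := by
      have e1 : fderiv ℝ B x = fderiv ℝ (fun y => ∑ i, d i y • VV i y) x := by
        apply Filter.EventuallyEq.fderiv_eq
        filter_upwards [hΩ.mem_nhds hx] with y hy using hdB y hy
      rw [e1, fderiv_fun_sum (A := fun i y => d i y • VV i y) (fun i _ => (hdd i).smul (diffVV i x))]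
      exact Finset.sum_congr rfl fun i _ => fderiv_fun_smul (hdd i) (diffVV i x)
    have plugA : ∀ k : Fin 7, fderiv ℝ (VV k) x (A x)
        = ∑ i, c i x • fderiv ℝ (VV k) x (VV i x) := by
      intro k
      rw [hcA x hx, map_sum]
      exact Finset.sum_congr rfl fun i _ => by rw [map_smul]
    have plugB : ∀ i : Fin 7, fderiv ℝ (VV i) x (B x)
        = ∑ k, d k x • fderiv ℝ (VV i) x (VV k x) := by
      intro i
      rw [hdB x hx, map_sum]
      exact Finset.sum_congr rfl fun k _ => by rw [map_smul]
    have expand : VectorField.lieBracket ℝ A B x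
        = (∑ i, ∑ k, (c i x * d k x) • VectorField.lieBracket ℝ (VV i) (VV k) x)
          + ((∑ l, fderiv ℝ (d l) x (A x) • VV l x)
            - (∑ l, fderiv ℝ (c l) x (B x) • VV l x)) := by
      have : VectorField.lieBracket ℝ A B x = fderiv ℝ B x (A x) - fderiv ℝ A x (B x) := rfl
      rw [this, hSA, hSB]
      simp only [ContinuousLinearMap.sum_apply, ContinuousLinearMap.add_apply,
        ContinuousLinearMap.coe_smul', Pi.smul_apply, ContinuousLinearMap.smulRight_apply]
      rw [Finset.sum_add_distrib, Finset.sum_add_distrib]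
      have e2 : ∀ k : Fin 7, d k x • fderiv ℝ (VV k) x (A x)
          = ∑ i, (c i x * d k x) • fderiv ℝ (VV k) x (VV i x) := by
        intro k
        rw [plugA k, Finset.smul_sum]
        exact Finset.sum_congr rfl fun i _ => by rw [smul_smul, mul_comm]
      have e3 : ∀ i : Fin 7, c i x • fderiv ℝ (VV i) x (B x)
          = ∑ k, (c i x * d k x) • fderiv ℝ (VV i) x (VV k x) := by
        intro i
        rw [plugB i, Finset.smul_sum]
        exact Finset.sum_congr rfl fun k _ => by rw [smul_smul]
      simp only [e2, e3]
      rw [Finset.sum_comm (s := Finset.univ) (t := Finset.univ)]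
      have e4 : (∑ i : Fin 7, ∑ k : Fin 7, (c i x * d k x) • fderiv ℝ (VV k) x (VV i x))
            - (∑ i : Fin 7, ∑ k : Fin 7, (c i x * d k x) • fderiv ℝ (VV i) x (VV k x))
          = ∑ i : Fin 7, ∑ k : Fin 7,
              (c i x * d k x) • VectorField.lieBracket ℝ (VV i) (VV k) x := by
        rw [← Finset.sum_sub_distrib]
        refine Finset.sum_congr rfl fun i _ => ?_
        rw [← Finset.sum_sub_distrib]
        refine Finset.sum_congr rfl fun k _ => ?_
        rw [← smul_sub]
        rfl
      rw [← e4]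
      abel
    have goalRHS : (∑ l, ((∑ i, ∑ k, c i x * d k x * (Tz i k l : ℝ))
          + (fderiv ℝ (d l) x (A x) - fderiv ℝ (c l) x (B x))) • VV l x)
        = (∑ i, ∑ k, (c i x * d k x) • ∑ l, (Tz i k l : ℝ) • VV l x)
          + ((∑ l, fderiv ℝ (d l) x (A x) • VV l x)
            - (∑ l, fderiv ℝ (c l) x (B x) • VV l x)) := by
      simp only [add_smul, sub_smul, Finset.sum_add_distrib, Finset.sum_sub_distrib,
        Finset.sum_smul, Finset.smul_sum, smul_smul]
      congr 1
      rw [Finset.sum_comm]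
      refine Finset.sum_congr rfl fun i _ => ?_
      rw [Finset.sum_comm]
    have hpair : ∀ i k : Fin 7, (c i x * d k x) • VectorField.lieBracket ℝ (VV i) (VV k) x
        = (c i x * d k x) • ∑ l, (Tz i k l : ℝ) • VV l x := by
      intro i k
      by_cases hi : 2 ≤ (i : ℕ)
      · simp [hc2 i hi]
      · by_cases hk : k = 6
        · subst hk; simp [hd6]
        · rw [table i k (by omega) hk x]
    rw [expand, goalRHS]
    simp only [hpair]

lemma VV_at0 (i : Fin 7) : VV i 0 1 = 0 := by
  fin_cases i <;>
    simp [VV_0, VV_1, VV_2, VV_3, VV_4, VV_5, VV_6, V0, V1, V2, V3, V4, V5, V6, sv,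
      Pi.single_apply]

lemma mem_coord {Ω : Set E6} {j : ℕ} {Z : E6 → E6} (h0 : (0 : E6) ∈ Ω) (h : Mem Ω j Z) :
    Z 0 1 = 0 := by
  obtain ⟨c, -, -, hz⟩ := h
  rw [hz 0 h0]
  rw [Finset.sum_apply]
  refine Finset.sum_eq_zero fun i _ => ?_
  simp [VV_at0 i]

lemma mem_base {Ω : Set E6} {Z : E6 → E6}
    (hsm : ∀ (n : ℕ), ∀ x ∈ Ω, ContDiffAt ℝ n Z x)
    (hker : ∀ x ∈ Ω, ∀ i : Fin 4, model31 i x (Z x) = 0) : Mem Ω 1 Z := by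
  refine ⟨fun i => if i = 0 then (fun x => Z x 5) else if i = 1 then (fun x => Z x 3) else 0,
      ?_, ?_, ?_⟩
  · intro i n x hx
    have h5 : ContDiffAt ℝ n (fun x => Z x 5) x :=
      ((prj 5).contDiff.contDiffAt).comp x (hsm n x hx)
    have h3 : ContDiffAt ℝ n (fun x => Z x 3) x :=
      ((prj 3).contDiff.contDiffAt).comp x (hsm n x hx)
    fin_cases i <;> simp <;> first | exact h5 | exact h3 | exact contDiffAt_const
  · intro i hi
    fin_cases i <;> (try beta_reduce) <;> simp_all (config := {decide := true}) [lev]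
  · intro x hx
    have k0 := hker x hx 0
    have k1 := hker x hx 1
    have k2 := hker x hx 2
    have k3 := hker x hx 3
    simp only [m31_0, m31_1, m31_2, m31_3,
      ContinuousLinearMap.add_apply, ContinuousLinearMap.coe_smul', Pi.smul_apply,
      dxi, ContinuousLinearMap.proj_apply, smul_eq_mul] at k0 k1 k2 k3
    rw [Fin.sum_univ_seven]
    norm_num
    rw [VV_0, VV_1]
    funext j
    fin_cases j
    · simp [V0, V1, sv, Pi.single_apply]; linear_combination k2
    · simp [V0, V1, sv, Pi.single_apply]; linear_combination k0 - x 2 * k2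
    · simp [V0, V1, sv, Pi.single_apply]; linear_combination k1 - x 3 * k2
    · simp [V0, V1, sv, Pi.single_apply]
    · simp [V0, V1, sv, Pi.single_apply]; linear_combination k3
    · simp [V0, V1, sv, Pi.single_apply]

lemma vec_decomp (v : E6) : v = ∑ i, v i • sv i := by
  funext j
  rw [Finset.sum_apply]
  simp [sv, Pi.single_apply]

lemma span_kill {x : E6} {μ : E6 →L[ℝ] ℝ} {w : E6}
    (hμ : μ ∈ Submodule.span ℝ
      ({model32 0 x, model32 1 x, model32 2 x, model32 3 x} : Set (E6 →L[ℝ] ℝ)))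
    (hw : ∀ j : Fin 4, model32 j x w = 0) : μ w = 0 := by
  induction hμ using Submodule.span_induction with
  | mem f hf => 
    simp only [Set.mem_insert_iff, Set.mem_singleton_iff] at hf
    rcases hf with rfl | rfl | rfl | rfl
    · exact hw 0
    · exact hw 1
    · exact hw 2
    · exact hw 3
  | zero => simp
  | add f g _ _ hf hg => simp [hf, hg]
  | smul a f _ hf => simp [hf]

lemma kill_V0 (x : E6) (j : Fin 4) : model32 j x (V0 x) = 0 := by
  fin_cases j <;>
    simp [m32_0, m32_1, m32_2, m32_3, dxi, V0, sv, Pi.single_apply]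

lemma kill_X2 (x : E6) (j : Fin 4) : model32 j x (X2 x) = 0 := by
  fin_cases j <;>
    simp [m32_0, m32_1, m32_2, m32_3, dxi, X2, V1, sv, Pi.single_apply] <;> ring

lemma val_V0 : V0 0 = sv 5 := rfl
lemma val_X2 : X2 0 = sv 3 - sv 4 := by
  funext j; simp [X2, V1, sv]; ring
lemma val_V2 : V2 0 = -sv 4 := rfl
lemma val_V3 : V3 0 = -sv 0 := by
  funext j; simp [V3, sv]
lemma val_V4 : V4 0 = sv 2 := rfl
lemma val_Q6 : Q6 0 = sv 1 := by
  funext j; simp [Q6, sv]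

/-- The length-four flag models (3.1.) and (3.𝟐.) on `ℝ⁶` are not
locally equivalent at the origin: there is no diffeomorphism `φ` between open
neighborhoods `U`, `V` of `0` with `φ 0 = 0` pulling back the span of the (3.1.)
forms at `φ x` to the span of the (3.𝟐.) forms at `x`, for every `x ∈ U`. -/
theorem stmt17 :
    ¬ ∃ (U V : Set (Fin 6 → ℝ)) (φ ψ : (Fin 6 → ℝ) → (Fin 6 → ℝ)),
      IsOpen U ∧ IsOpen V ∧ (0 : Fin 6 → ℝ) ∈ U ∧ (0 : Fin 6 → ℝ) ∈ V ∧
      φ 0 = 0 ∧ Set.BijOn φ U V ∧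
      ContDiffOn ℝ (⊤ : ℕ∞) φ U ∧ ContDiffOn ℝ (⊤ : ℕ∞) ψ V ∧ (∀ x ∈ U, ψ (φ x) = x) ∧
      (∀ x ∈ U,
        Submodule.span ℝ
            ({(model31 0 (φ x)).comp (fderiv ℝ φ x),
              (model31 1 (φ x)).comp (fderiv ℝ φ x),
              (model31 2 (φ x)).comp (fderiv ℝ φ x),
              (model31 3 (φ x)).comp (fderiv ℝ φ x)} :
              Set ((Fin 6 → ℝ) →L[ℝ] ℝ)) =
          Submodule.span ℝ {model32 0 x, model32 1 x, model32 2 x, model32 3 x}) := by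
  rintro ⟨U, V, φ, ψ, hU, hV, hU0, hV0, hφ0, hbij, hφ, hψ, hinv, hspan⟩
  have hψ0 : ψ 0 = 0 := by
    have h := hinv 0 hU0
    rwa [hφ0] at h
  have hmaps : ∀ x ∈ U, φ x ∈ V := fun x hx => hbij.mapsTo hx
  have hψV : ∀ y ∈ V, ψ y ∈ U := by
    intro y hy
    obtain ⟨x, hxU, rfl⟩ := hbij.surjOn hy
    rw [hinv x hxU]; exact hxU
  have hφψ : ∀ y ∈ V, φ (ψ y) = y := by
    intro y hy
    obtain ⟨x, hxU, rfl⟩ := hbij.surjOn hy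
    rw [hinv x hxU]
  have hφat : ∀ n : ℕ, ∀ x ∈ U, ContDiffAt ℝ n φ x := fun n x hx =>
    (hφ.contDiffAt (hU.mem_nhds hx)).of_le (by exact_mod_cast le_top)
  have hψat : ∀ n : ℕ, ∀ y ∈ V, ContDiffAt ℝ n ψ y := fun n y hy =>
    (hψ.contDiffAt (hV.mem_nhds hy)).of_le (by exact_mod_cast le_top)
  have hφd : ∀ x ∈ U, DifferentiableAt ℝ φ x := fun x hx =>
    (hφat 1 x hx).differentiableAt (by norm_num)
  have hψd : ∀ y ∈ V, DifferentiableAt ℝ ψ y := fun y hy =>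
    (hψat 1 y hy).differentiableAt (by norm_num)
  have hidU : ∀ x ∈ U, (fderiv ℝ ψ (φ x)).comp (fderiv ℝ φ x) = ContinuousLinearMap.id ℝ E6 := by
    intro x hx
    have h1 : fderiv ℝ (ψ ∘ φ) x = (fderiv ℝ ψ (φ x)).comp (fderiv ℝ φ x) :=
      fderiv_comp x (hψd _ (hmaps x hx)) (hφd x hx)
    have h2 : ψ ∘ φ =ᶠ[nhds x] id := by
      filter_upwards [hU.mem_nhds hx] with y hy using hinv y hy
    rw [← h1, h2.fderiv_eq, fderiv_id]
  have hidV : ∀ y ∈ V, (fderiv ℝ φ (ψ y)).comp (fderiv ℝ ψ y) = ContinuousLinearMap.id ℝ E6 := by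
    intro y hy
    have h1 : fderiv ℝ (φ ∘ ψ) y = (fderiv ℝ φ (ψ y)).comp (fderiv ℝ ψ y) :=
      fderiv_comp y (hφd _ (hψV y hy)) (hψd y hy)
    have h2 : φ ∘ ψ =ᶠ[nhds y] id := by
      filter_upwards [hV.mem_nhds hy] with z hz using hφψ z hz
    rw [← h1, h2.fderiv_eq, fderiv_id]
  have hinvfd : ∀ y ∈ V, (fderiv ℝ ψ y).inverse = fderiv ℝ φ (ψ y) := by
    intro y hy
    apply ContinuousLinearMap.inverse_eq
    · have h := hidU (ψ y) (hψV y hy)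
      rwa [hφψ y hy] at h
    · exact hidV y hy
  set Za : E6 → E6 := fun z => fderiv ℝ φ (ψ z) (V0 (ψ z)) with hZa
  set Zb : E6 → E6 := fun z => fderiv ℝ φ (ψ z) (X2 (ψ z)) with hZb
  have hpb : ∀ (W : E6 → E6), ∀ y ∈ V, pullback ℝ ψ W y = fderiv ℝ φ (ψ y) (W (ψ y)) := by
    intro W y hy
    rw [VectorField.pullback, hinvfd y hy]
  have hsm : ∀ (W : E6 → E6), (∀ n : ℕ, ContDiff ℝ (n : ℕ∞) W) →
      ∀ (n : ℕ), ∀ z ∈ V, ContDiffAt ℝ n (fun z => fderiv ℝ φ (ψ z) (W (ψ z))) z := by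
    intro W hW n z hz
    have h1 : ContDiffAt ℝ n (fderiv ℝ φ) (ψ z) :=
      (hφat (n + 1) (ψ z) (hψV z hz)).fderiv_right (by exact_mod_cast le_refl _)
    exact (h1.comp z (hψat n z hz)).clm_apply ((hW n).contDiffAt.comp z (hψat n z hz))
  have hkill : ∀ z ∈ V, ∀ (w : E6), (∀ j : Fin 4, model32 j (ψ z) w = 0) →
      ∀ i : Fin 4, model31 i z (fderiv ℝ φ (ψ z) w) = 0 := by
    intro z hz w hw i
    have hmem : (model31 i (φ (ψ z))).comp (fderiv ℝ φ (ψ z)) ∈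
        Submodule.span ℝ ({model32 0 (ψ z), model32 1 (ψ z), model32 2 (ψ z),
          model32 3 (ψ z)} : Set (E6 →L[ℝ] ℝ)) := by
      rw [← hspan (ψ z) (hψV z hz)]
      apply Submodule.subset_span
      fin_cases i <;> simp
    have h := span_kill hmem hw
    rw [ContinuousLinearMap.comp_apply, hφψ z hz] at h
    exact h
  have cdV0 : ∀ n : ℕ, ContDiff ℝ (n : ℕ∞) V0 := fun n => VV_0 ▸ contDiffVV 0 n
  have hkerA : ∀ z ∈ V, ∀ i : Fin 4, model31 i z (Za z) = 0 := fun z hz i =>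
    hkill z hz _ (fun j => kill_V0 (ψ z) j) i
  have hkerB : ∀ z ∈ V, ∀ i : Fin 4, model31 i z (Zb z) = 0 := fun z hz i =>
    hkill z hz _ (fun j => kill_X2 (ψ z) j) i
  have memA : Mem V 1 Za := mem_base (fun n x hx => hsm V0 cdV0 n x hx) hkerA
  have memB : Mem V 1 Zb := mem_base (fun n x hx => hsm X2 contDiffX2 n x hx) hkerB
  -- relatedness
  have hstep : ∀ (G W ZG ZW : E6 → E6), Differentiable ℝ G → Differentiable ℝ W →
      (∀ y ∈ V, ZG y = pullback ℝ ψ G y) → (∀ y ∈ V, ZW y = pullback ℝ ψ W y) →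
      ∀ y ∈ V, lieBracket ℝ ZG ZW y = pullback ℝ ψ (lieBracket ℝ G W) y := by
    intro G W ZG ZW hG hW h1 h2 y hy
    have e1 : lieBracket ℝ ZG ZW y = lieBracket ℝ (pullback ℝ ψ G) (pullback ℝ ψ W) y := by
      apply Filter.EventuallyEq.lieBracket_vectorField_eq
      · filter_upwards [hV.mem_nhds hy] with z hz using h1 z hz
      · filter_upwards [hV.mem_nhds hy] with z hz using h2 z hz
    rw [e1, ← VectorField.pullback_lieBracket_of_isSymmSndFDerivAt
      ((hψat 2 y hy).isSymmSndFDerivAt (by norm_num)) (hψat 2 y hy) (hG (ψ y)) (hW (ψ y))]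
  have hrelA : ∀ y ∈ V, Za y = pullback ℝ ψ V0 y := fun y hy => (hpb V0 y hy).symm
  have hrelB : ∀ y ∈ V, Zb y = pullback ℝ ψ X2 y := fun y hy => (hpb X2 y hy).symm
  have dV0 : Differentiable ℝ V0 := fun y => VV_0 ▸ diffVV 0 y
  have dV2 : Differentiable ℝ V2 := fun y => VV_2 ▸ diffVV 2 y
  have dV3 : Differentiable ℝ V3 := fun y => VV_3 ▸ diffVV 3 y
  have dV4 : Differentiable ℝ V4 := fun y => VV_4 ▸ diffVV 4 y
  have dV5 : Differentiable ℝ V5 := fun y => VV_5 ▸ diffVV 5 y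
  have dX2 : Differentiable ℝ X2 := fun y => (hX2 y).differentiableAt
  have h3 : ∀ y ∈ V, lieBracket ℝ Za Zb y = pullback ℝ ψ V2 y := by
    intro y hy
    have h := hstep V0 X2 Za Zb dV0 dX2 hrelA hrelB y hy
    rwa [brX0] at h
  have h4 : ∀ y ∈ V, lieBracket ℝ Zb (lieBracket ℝ Za Zb) y = pullback ℝ ψ V3 y := by
    intro y hy
    have h := hstep X2 V2 Zb (lieBracket ℝ Za Zb) dX2 dV2 hrelB h3 y hy
    rwa [brX2] at h
  have h5 : ∀ y ∈ V, lieBracket ℝ Zb (lieBracket ℝ Zb (lieBracket ℝ Za Zb)) y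
      = pullback ℝ ψ V4 y := by
    intro y hy
    have h := hstep X2 V3 Zb (lieBracket ℝ Zb (lieBracket ℝ Za Zb)) dX2 dV3 hrelB h4 y hy
    rwa [brX3] at h
  have h5' : ∀ y ∈ V, lieBracket ℝ Zb (lieBracket ℝ Zb (lieBracket ℝ Zb
      (lieBracket ℝ Za Zb))) y = pullback ℝ ψ V5 y := by
    intro y hy
    have h := hstep X2 V4 Zb (lieBracket ℝ Zb (lieBracket ℝ Zb (lieBracket ℝ Za Zb)))
      dX2 dV4 hrelB h5 y hy
    rwa [brX4] at h
  have h6 : ∀ y ∈ V, lieBracket ℝ Zb (lieBracket ℝ Zb (lieBracket ℝ Zb (lieBracket ℝ Zb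
      (lieBracket ℝ Za Zb)))) y = pullback ℝ ψ Q6 y := by
    intro y hy
    have h := hstep X2 V5 Zb (lieBracket ℝ Zb (lieBracket ℝ Zb (lieBracket ℝ Zb
      (lieBracket ℝ Za Zb)))) dX2 dV5 hrelB h5' y hy
    rwa [brX5] at h
  -- Mem chain
  have mem3 : Mem V 2 (lieBracket ℝ Za Zb) := Mem.bracket hV memA memB (by norm_num)
  have mem4 : Mem V 3 (lieBracket ℝ Zb (lieBracket ℝ Za Zb)) :=
    Mem.bracket hV memB mem3 (by norm_num)
  have mem5 : Mem V 4 (lieBracket ℝ Zb (lieBracket ℝ Zb (lieBracket ℝ Za Zb))) :=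
    Mem.bracket hV memB mem4 (by norm_num)
  have mem5' : Mem V 5 (lieBracket ℝ Zb (lieBracket ℝ Zb (lieBracket ℝ Zb
      (lieBracket ℝ Za Zb)))) := Mem.bracket hV memB mem5 (by norm_num)
  have mem6 : Mem V 6 (lieBracket ℝ Zb (lieBracket ℝ Zb (lieBracket ℝ Zb (lieBracket ℝ Zb
      (lieBracket ℝ Za Zb))))) := Mem.bracket hV memB mem5' (by norm_num)
  -- values at 0
  have val : ∀ (C F : E6 → E6), (∀ y ∈ V, C y = pullback ℝ ψ F y) →
      C 0 = fderiv ℝ φ 0 (F 0) := by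
    intro C F h
    rw [h 0 hV0, hpb F 0 hV0, hψ0]
  have eV0 : fderiv ℝ φ 0 (V0 0) 1 = 0 := by
    rw [← val Za V0 hrelA]; exact mem_coord hV0 memA
  have eX2 : fderiv ℝ φ 0 (X2 0) 1 = 0 := by
    rw [← val Zb X2 hrelB]; exact mem_coord hV0 memB
  have eV2 : fderiv ℝ φ 0 (V2 0) 1 = 0 := by
    rw [← val _ V2 h3]; exact mem_coord hV0 mem3
  have eV3 : fderiv ℝ φ 0 (V3 0) 1 = 0 := by
    rw [← val _ V3 h4]; exact mem_coord hV0 mem4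
  have eV4 : fderiv ℝ φ 0 (V4 0) 1 = 0 := by
    rw [← val _ V4 h5]; exact mem_coord hV0 mem5
  have eQ6 : fderiv ℝ φ 0 (Q6 0) 1 = 0 := by
    rw [← val _ Q6 h6]; exact mem_coord hV0 mem6
  -- the functional kills all basis vectors
  have hL4 : fderiv ℝ φ 0 (sv 4) 1 = 0 := by
    have h := eV2
    rw [val_V2, map_neg] at h
    simpa using h
  have hL0 : fderiv ℝ φ 0 (sv 0) 1 = 0 := by
    have h := eV3
    rw [val_V3, map_neg] at h
    simpa using h
  have hL1 : fderiv ℝ φ 0 (sv 1) 1 = 0 := by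
    have h := eQ6
    rwa [val_Q6] at h
  have hL2 : fderiv ℝ φ 0 (sv 2) 1 = 0 := by
    have h := eV4
    rwa [val_V4] at h
  have hL3 : fderiv ℝ φ 0 (sv 3) 1 = 0 := by
    have h := eX2
    rw [val_X2, map_sub] at h
    simp only [Pi.sub_apply] at h
    linarith [hL4]
  have hL5 : fderiv ℝ φ 0 (sv 5) 1 = 0 := by
    have h := eV0
    rwa [val_V0] at h
  have hL : ∀ i : Fin 6, fderiv ℝ φ 0 (sv i) 1 = 0 := by
    intro i
    fin_cases i
    · exact hL0
    · exact hL1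
    · exact hL2
    · exact hL3
    · exact hL4
    · exact hL5
  -- contradiction
  have hid := hidV 0 hV0
  rw [hψ0] at hid
  set u := fderiv ℝ ψ 0 (sv 1) with hu_def
  have hu : fderiv ℝ φ 0 u = sv 1 := by
    have h := congrArg (fun T : E6 →L[ℝ] E6 => T (sv 1)) hid
    simpa using h
  have h2 : fderiv ℝ φ 0 u 1 = 0 := by
    conv_lhs => rw [vec_decomp u]
    rw [map_sum]
    rw [Finset.sum_apply]
    refine Finset.sum_eq_zero fun i _ => ?_
    rw [map_smul]
    simp [hL i]
  rw [hu] at h2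
  simp [sv, Pi.single_apply] at h2
end
end

section
/- The algebra of infinitesimal automorphisms of the homogeneous Cartan flag of length three acts transitively on ℝ⁵: for every point p ∈ ℝ⁵ and every vector v ∈ ℝ⁵ there exists an infinitesimal automorphism ξ of the Pfaffian system spanned by ω¹ = dx² + x³dx¹, ω² = dx³ + x⁴dx¹, ω³ = dx⁴ + x⁵dx¹ with ξ(p) = v; such a ξ can be obtained as the iterated prolongation ξ = A ∂₁ + B ∂₂ + C ∂₃ + D ∂₄ + E ∂₅ of a Darboux infinitesimal automorphism A ∂₁ + B ∂₂ + C ∂₃, where D = (∂C/∂x² + x⁴ ∂A/∂x²)·x³ + (∂C/∂x³ + x⁴ ∂A/∂x³)·x⁴ − (∂C/∂x¹ + x⁴ ∂A/∂x¹) and E = (∂D/∂x² + x⁵ ∂A/∂x²)·x³ + (∂D/∂x³ + x⁵ ∂A/∂x³)·x⁴ + (∂D/∂x⁴)·x⁵ − (∂D/∂x¹ + x⁵ ∂A/∂x¹). -/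
open scoped BigOperators

noncomputable section

/-- The Engel flag on `ℝ⁴`, generated by `ω¹ = dx² + x³dx¹` and `ω² = dx³ + x⁴dx¹`. -/
def engel : Fin 2 → (Fin 4 → ℝ) → (Fin 4 → ℝ) →L[ℝ] ℝ :=
  ![fun x => dxi 1 + x 2 • dxi 0, fun x => dxi 2 + x 3 • dxi 0]

/-- Projection `ℝ⁴ → ℝ³` onto the first three coordinates. -/
def p43 (x : Fin 4 → ℝ) : Fin 3 → ℝ := fun i => x (Fin.castLE (by norm_num) i)

/-- The homogeneous Cartan flag of length three on `ℝ⁵`, generated by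
`ω¹ = dx² + x³dx¹`, `ω² = dx³ + x⁴dx¹`, `ω³ = dx⁴ + x⁵dx¹`. -/
def cartan : Fin 3 → (Fin 5 → ℝ) → (Fin 5 → ℝ) →L[ℝ] ℝ :=
  ![fun x => dxi 1 + x 2 • dxi 0, fun x => dxi 2 + x 3 • dxi 0,
    fun x => dxi 3 + x 4 • dxi 0]

/-- Projection `ℝ⁵ → ℝ³` onto the first three coordinates. -/
def p53 (x : Fin 5 → ℝ) : Fin 3 → ℝ := fun i => x (Fin.castLE (by norm_num) i)

/-- Projection `ℝ⁵ → ℝ⁴` onto the first four coordinates. -/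
def p54 (x : Fin 5 → ℝ) : Fin 4 → ℝ := fun i => x (Fin.castLE (by norm_num) i)

open ContinuousLinearMap

/-- cubic polynomial in the first coordinate -/
def cub {n : ℕ} [NeZero n] (c0 c1 c2 c3 : ℝ) : (Fin n → ℝ) → ℝ :=
  fun y => c0 + c1 * y 0 + c2 * (y 0)^2/2 + c3 * (y 0)^3/6

lemma cub_hasFDerivAt {n : ℕ} [NeZero n] (c0 c1 c2 c3 : ℝ) (x : Fin n → ℝ) :
    HasFDerivAt (cub c0 c1 c2 c3)
      ((c1 + c2 * x 0 + c3 * (x 0)^2/2) • (proj 0 : (Fin n → ℝ) →L[ℝ] ℝ)) x := by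
  have h : HasDerivAt (fun t : ℝ => c0 + c1 * t + c2 * t^2/2 + c3 * t^3/6)
      (c1 + c2 * x 0 + c3 * (x 0)^2/2) (x 0) := by
    have := (((hasDerivAt_const (x 0) c0).add ((hasDerivAt_id (x 0)).const_mul c1)).add
      (((hasDerivAt_pow 2 (x 0)).const_mul c2).div_const 2)).add
      (((hasDerivAt_pow 3 (x 0)).const_mul c3).div_const 6)
    refine this.congr_deriv ?_
    norm_num
    ring
  exact h.comp_hasFDerivAt x ((proj 0 : (Fin n → ℝ) →L[ℝ] ℝ).hasFDerivAt)

lemma cub_contDiff {n : ℕ} [NeZero n] (c0 c1 c2 c3 : ℝ) :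
    ContDiff ℝ (⊤ : ℕ∞) (cub (n := n) c0 c1 c2 c3) := by
  have h0 : ContDiff ℝ (⊤ : ℕ∞) (fun y : Fin n → ℝ => y 0) := (proj 0 : (Fin n → ℝ) →L[ℝ] ℝ).contDiff
  exact ((contDiff_const.add (contDiff_const.mul h0)).add
      ((contDiff_const.mul (h0.pow 2)).div_const 2)).add
      ((contDiff_const.mul (h0.pow 3)).div_const 6)

lemma pd_cub {n : ℕ} [NeZero n] (c0 c1 c2 c3 : ℝ) (j : Fin n) (x : Fin n → ℝ) :
    pd j (cub c0 c1 c2 c3) x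
      = (c1 + c2 * x 0 + c3 * (x 0)^2/2) * (Pi.single j (1:ℝ) : Fin n → ℝ) 0 := by
  unfold pd
  rw [(cub_hasFDerivAt c0 c1 c2 c3 x).fderiv]
  simp [ContinuousLinearMap.proj_apply]

lemma fderiv_omega {n : ℕ} [NeZero n] (k j : Fin n) (x : Fin n → ℝ) :
    fderiv ℝ (fun y : Fin n → ℝ => dxi k + y j • dxi 0) x
      = (proj j : (Fin n → ℝ) →L[ℝ] ℝ).smulRight (dxi 0) := by
  have h : HasFDerivAt (fun y : Fin n → ℝ => dxi k + y j • dxi 0)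
      ((proj j : (Fin n → ℝ) →L[ℝ] ℝ).smulRight (dxi 0)) x :=
    (hasFDerivAt_const (dxi k) x).add
      ((proj j : (Fin n → ℝ) →L[ℝ] ℝ).smulRight (dxi 0)).hasFDerivAt
    |>.congr_fderiv (zero_add _)
  exact h.fderiv

lemma lieD_eq {n : ℕ} [NeZero n] (k j : Fin n) (ξ : (Fin n → ℝ) → (Fin n → ℝ))
    (F : (Fin n → ℝ) →L[ℝ] ℝ) (x v : Fin n → ℝ)
    (hF : HasFDerivAt (fun y => ξ y k + y j * ξ y 0) F x) :
    lieD ξ (fun y => dxi k + y j • dxi 0) x v = F v + (ξ x j * v 0 - v j * ξ x 0) := by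
  unfold lieD
  have h1 : (fun y => (dxi k + y j • dxi (0 : Fin n)) (ξ y)) = fun y => ξ y k + y j * ξ y 0 := rfl
  rw [h1, hF.fderiv, fderiv_omega]
  simp [ContinuousLinearMap.smulRight_apply, ContinuousLinearMap.proj_apply, dxi]

/-- HasFDerivAt for `cub + a * (·) j` -/
lemma cubl_hasFDerivAt {n : ℕ} [NeZero n] (c0 c1 c2 c3 a : ℝ) (j : Fin n) (x : Fin n → ℝ) :
    HasFDerivAt (fun y : Fin n → ℝ => cub c0 c1 c2 c3 y + a * y j)
      (((c1 + c2 * x 0 + c3 * (x 0)^2/2) • (proj 0 : (Fin n → ℝ) →L[ℝ] ℝ))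
        + a • (proj j : (Fin n → ℝ) →L[ℝ] ℝ)) x :=
  (cub_hasFDerivAt c0 c1 c2 c3 x).add
    (((proj j : (Fin n → ℝ) →L[ℝ] ℝ).hasFDerivAt).const_mul a)

/-- The algebra of infinitesimal automorphisms of the homogeneous
Cartan flag of length three acts transitively on `ℝ⁵`: for every `p, v ∈ ℝ⁵`
there is an infinitesimal automorphism `ξ` of the system spanned by
`ω¹ = dx² + x³dx¹`, `ω² = dx³ + x⁴dx¹`, `ω³ = dx⁴ + x⁵dx¹` with `ξ p = v`; such
a `ξ` is obtained as the iterated prolongation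
`ξ = A∂₁ + B∂₂ + C∂₃ + D∂₄ + E∂₅` of a Darboux infinitesimal automorphism
`A∂₁ + B∂₂ + C∂₃`, with `D` and `E` given by the prolongation formulas. -/
theorem stmt19 (p v : Fin 5 → ℝ) :
    ∃ A B C : (Fin 3 → ℝ) → ℝ, ∃ D : (Fin 4 → ℝ) → ℝ, ∃ E : (Fin 5 → ℝ) → ℝ,
      ContDiff ℝ (⊤ : ℕ∞) A ∧ ContDiff ℝ (⊤ : ℕ∞) B ∧ ContDiff ℝ (⊤ : ℕ∞) C ∧
      IsIA ![darboux] (fun x => ![A x, B x, C x]) ∧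
      (∀ x : Fin 4 → ℝ,
        D x = (pd 1 C (p43 x) + x 3 * pd 1 A (p43 x)) * x 2
            + (pd 2 C (p43 x) + x 3 * pd 2 A (p43 x)) * x 3
            - (pd 0 C (p43 x) + x 3 * pd 0 A (p43 x))) ∧
      (∀ x : Fin 5 → ℝ,
        E x = (pd 1 D (p54 x) + x 4 * pd 1 A (p53 x)) * x 2
            + (pd 2 D (p54 x) + x 4 * pd 2 A (p53 x)) * x 3
            + pd 3 D (p54 x) * x 4
            - (pd 0 D (p54 x) + x 4 * pd 0 A (p53 x))) ∧
      IsIA cartan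
        (fun x => ![A (p53 x), B (p53 x), C (p53 x), D (p54 x), E x]) ∧
      (fun x : Fin 5 → ℝ =>
        ![A (p53 x), B (p53 x), C (p53 x), D (p54 x), E x]) p = v := by
  set e := -(v 4) with he
  set d := v 3 + v 4 * p 0 with hd
  set g := -(v 2) - d * p 0 - e * (p 0)^2/2 with hg
  set b := v 1 - g * p 0 - d * (p 0)^2/2 - e * (p 0)^3/6 with hb
  refine ⟨cub (v 0) 0 0 0, cub b g d e, cub (-g) (-d) (-e) 0, cub d e 0 0,
    cub (-e) 0 0 0, cub_contDiff _ _ _ _, cub_contDiff _ _ _ _, cub_contDiff _ _ _ _,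
    ?_, ?_, ?_, ?_, ?_⟩
  · -- IsIA darboux
    intro i x
    refine ⟨0, fun w => ?_⟩
    fin_cases i
    have heq : (fun y : Fin 3 → ℝ =>
        (fun z : Fin 3 → ℝ => ![cub (v 0) 0 0 0 z, cub b g d e z, cub (-g) (-d) (-e) 0 z]) y 1
          + y 2 * (fun z : Fin 3 → ℝ => ![cub (v 0) 0 0 0 z, cub b g d e z, cub (-g) (-d) (-e) 0 z]) y 0)
        = fun y : Fin 3 → ℝ => cub b g d e y + (v 0) * y 2 := by
      funext y
      simp [cub]
      ring
    have h0 : lieD (fun z : Fin 3 → ℝ =>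
        ![cub (v 0) 0 0 0 z, cub b g d e z, cub (-g) (-d) (-e) 0 z])
        (fun y : Fin 3 → ℝ => dxi 1 + y 2 • dxi 0) x w = 0 := by
      rw [lieD_eq 1 2 _ _ x w (heq ▸ cubl_hasFDerivAt b g d e (v 0) 2 x)]
      simp [cub, ContinuousLinearMap.proj_apply]
      ring
    exact h0.trans (by simp)
  · -- D formula
    intro x
    simp only [pd_cub]
    have h0 : p43 x 0 = x 0 := rfl
    simp [h0, Pi.single_apply, cub]
    try ring
  · -- E formula
    intro x
    simp only [pd_cub]
    have h0 : p54 x 0 = x 0 := rfl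
    have h1 : p53 x 0 = x 0 := rfl
    simp [h0, h1, Pi.single_apply, cub]
    try ring
  · -- IsIA cartan
    intro i x
    refine ⟨0, fun w => ?_⟩
    set ξ : (Fin 5 → ℝ) → (Fin 5 → ℝ) := fun z =>
      ![cub (v 0) 0 0 0 (p53 z), cub b g d e (p53 z), cub (-g) (-d) (-e) 0 (p53 z),
        cub d e 0 0 (p54 z), cub (-e) 0 0 0 z] with hξ
    have hx0 : ∀ z : Fin 5 → ℝ, p53 z 0 = z 0 := fun _ => rfl
    have hx0' : ∀ z : Fin 5 → ℝ, p54 z 0 = z 0 := fun _ => rfl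
    fin_cases i
    · have heq : (fun y : Fin 5 → ℝ => ξ y 1 + y 2 * ξ y 0)
          = fun y : Fin 5 → ℝ => cub b g d e y + (v 0) * y 2 := by
        funext y
        simp [hξ, cub, hx0]
        ring
      have h0 : lieD ξ (fun y : Fin 5 → ℝ => dxi 1 + y 2 • dxi 0) x w = 0 := by
        rw [lieD_eq 1 2 ξ _ x w (heq ▸ cubl_hasFDerivAt b g d e (v 0) 2 x)]
        simp [hξ, cub, hx0, hx0', ContinuousLinearMap.proj_apply]
        ring
      exact h0.trans (by simp)
    · have heq : (fun y : Fin 5 → ℝ => ξ y 2 + y 3 * ξ y 0)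
          = fun y : Fin 5 → ℝ => cub (-g) (-d) (-e) 0 y + (v 0) * y 3 := by
        funext y
        simp [hξ, cub, hx0]
        ring
      have h0 : lieD ξ (fun y : Fin 5 → ℝ => dxi 2 + y 3 • dxi 0) x w = 0 := by
        rw [lieD_eq 2 3 ξ _ x w (heq ▸ cubl_hasFDerivAt (-g) (-d) (-e) 0 (v 0) 3 x)]
        simp [hξ, cub, hx0, hx0', ContinuousLinearMap.proj_apply]
        ring
      exact h0.trans (by simp)
    · have heq : (fun y : Fin 5 → ℝ => ξ y 3 + y 4 * ξ y 0)
          = fun y : Fin 5 → ℝ => cub d e 0 0 y + (v 0) * y 4 := by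
        funext y
        simp [hξ, cub, hx0, hx0']
        ring
      have h0 : lieD ξ (fun y : Fin 5 → ℝ => dxi 3 + y 4 • dxi 0) x w = 0 := by
        rw [lieD_eq 3 4 ξ _ x w (heq ▸ cubl_hasFDerivAt d e 0 0 (v 0) 4 x)]
        simp [hξ, cub, hx0, hx0', ContinuousLinearMap.proj_apply]
        ring
      exact h0.trans (by simp)
  · -- evaluation at p
    funext i
    have h1 : p53 p 0 = p 0 := rfl
    have h2 : p54 p 0 = p 0 := rfl
    fin_cases i <;> simp [cub, h1, h2, hb, hg, hd, he] <;> try ring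
end
end
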